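/- For every integer n ≥ 1, every q ∈ (0,1), and every x ∈ [0,1], the first moment of the operator satisfies the lower bound K_{n,q}^{β^(1),…,β^(r)}(s;x) ≥ x β_n^(r). -/

import Mathlib

open Filter Topology

noncomputable def qInt (q : ℝ) (m : ℕ) : ℝ := (1 - q ^ m) / (1 - q)

noncomputable def qPoch (ρ q : ℝ) (m : ℕ) : ℝ := ∏ i ∈ Finset.range m, (1 - ρ * q ^ i)

noncomputable def qRInt (q α β : ℝ) (f : ℝ → ℝ) : ℝ :=
  (1 - q) * (β - α) * ∑' j : ℕ, f (α + (β - α) * q ^ j) * q ^ j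

def lastIdx {r : ℕ} (l : Fin r → ℕ) : ℕ := if h : 0 < r then l ⟨r - 1, by omega⟩ else 0

noncomputable def Kop (r : ℕ) (β : Fin r → ℕ → ℝ) (n : ℕ) (q : ℝ) (f : ℝ → ℝ) (x : ℝ) : ℝ :=
  (∏ k : Fin r, qPoch (x * β k n) q n) *
    ∑' p : ℕ, (∑ l ∈ Finset.Nat.antidiagonalTuple r p,
      (∏ j : Fin r, qPoch (q ^ n) q (l j)) *
      (qInt q (n + lastIdx l - 1) * q ^ (-(lastIdx l : ℤ))) *
      (∏ j : Fin r, (β j n) ^ (l j) / qPoch q q (l j)) *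
      qRInt q (qInt q (lastIdx l) / qInt q (n + lastIdx l - 1))
        (qInt q (lastIdx l + 1) / qInt q (n + lastIdx l - 1)) f) * x ^ p

noncomputable def supNorm (g : ℝ → ℝ) : ℝ := ⨆ x : Set.Icc (0:ℝ) 1, |g x|

noncomputable def gammaK (q : ℝ) (n : ℕ) (b : ℝ) : ℝ :=
  4 * (1 - b) + (1 / qInt q n) * (b * (1 + 2 / qInt q 2) + 2 / qInt q 2) +
    1 / (qInt q 3 * (qInt q n) ^ 2)

noncomputable def modCont (f : ℝ → ℝ) (δ : ℝ) : ℝ :=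
  sSup {y : ℝ | ∃ s x : ℝ, s ∈ Set.Icc (0:ℝ) 1 ∧ x ∈ Set.Icc (0:ℝ) 1 ∧ |s - x| ≤ δ ∧ y = |f s - f x|}

noncomputable def dwS (b c : ℕ → ℕ) (s : ℕ → ℝ) (n : ℕ) : ℝ :=
  ∑ m ∈ Finset.Icc (b n + 1) (c n), s m

def DWAStatConv (b c : ℕ → ℕ) (s : ℕ → ℝ) (A : ℕ → ℕ → ℝ) (x : ℕ → ℝ) (l : ℝ) : Prop :=
  ∀ ε : ℝ, 0 < ε →
    Tendsto (fun n => (1 / dwS b c s n) *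
      ∑ m ∈ Finset.Icc (b n + 1) (c n),
        ∑' k : ℕ, Set.indicator {k : ℕ | ε ≤ |x k - l|} (fun k => s m * A m k) k)
      atTop (𝓝 0)

def DWRegular (b c : ℕ → ℕ) (s : ℕ → ℝ) (A : ℕ → ℕ → ℝ) : Prop :=
  ∀ (x : ℕ → ℝ) (l : ℝ), Tendsto x atTop (𝓝 l) →
    Tendsto (fun n => (1 / dwS b c s n) *
      ∑ m ∈ Finset.Icc (b n + 1) (c n), s m * ∑' k : ℕ, A m k * x k) atTop (𝓝 l)

noncomputable def pSum (p : ℕ → ℝ) (u : ℝ) : ℝ := ∑' j : ℕ, p (j + 1) * u ^ j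

noncomputable def leftFilter (R : ENNReal) : Filter ℝ :=
  if R = ⊤ then atTop else 𝓝[<] R.toReal

def PSConv (p : ℕ → ℝ) (R : ENNReal) (η : ℕ → ℝ) (l : ℝ) : Prop :=
  Tendsto (fun u => (1 / pSum p u) * ∑' j : ℕ, η (j + 1) * p (j + 1) * u ^ j)
    (leftFilter R) (𝓝 l)

def PSRadius (p : ℕ → ℝ) (R : ENNReal) : Prop :=
  ∀ u : ℝ, 0 ≤ u →
    ((ENNReal.ofReal u < R → Summable fun j : ℕ => p (j + 1) * u ^ j) ∧
     (R < ENNReal.ofReal u → ¬ Summable fun j : ℕ => p (j + 1) * u ^ j))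

def PSRegular (p : ℕ → ℝ) (R : ENNReal) : Prop :=
  ∀ j : ℕ, 1 ≤ j → Tendsto (fun u => p j * u ^ (j - 1) / pSum p u) (leftFilter R) (𝓝 0)

/-!
Only the last index `l_r` carries the integral, so the series defining the operator factors
as a product over `j` of one-variable series `∑ₘ c_m t_j^m w_j(m)`, where
`c_m = (q^n;q)_m / (q;q)_m`, `t_j = x β_n^(j)`, and `w_j = 1` for `j < r`. By the `q`-binomial
theorem `∑ₘ c_m t^m = 1 / (t;q)_n`, the factors with `j < r` cancel against `(t_j;q)_n`.
For `f(s) = s` the last weight is `([m]_q + q^m / (1 + q)) / [n+m-1]_q ≥ [m]_q / [n+m-1]_q`,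
and the identity `c_{m+1} [m+1]_q = c_m [n+m]_q` shifts `∑ₘ c_m [m]_q / [n+m-1]_q t^m`
into `t ∑ₘ c_m t^m = t / (t;q)_n`.
-/

open Finset

lemma qPoch_succ (ρ q : ℝ) (m : ℕ) : qPoch ρ q (m + 1) = qPoch ρ q m * (1 - ρ * q ^ m) :=
  prod_range_succ _ _

lemma qPoch_succ' (ρ q : ℝ) (m : ℕ) : qPoch ρ q (m + 1) = (1 - ρ) * qPoch (ρ * q) q m := by
  rw [qPoch, prod_range_succ', pow_zero, mul_one, mul_comm, qPoch]
  exact congrArg _ (prod_congr rfl fun i _ => by ring)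

lemma qPoch_nonneg {ρ q : ℝ} (hq0 : 0 ≤ q) (hq1 : q ≤ 1) (hρ : ρ ≤ 1) (m : ℕ) :
    0 ≤ qPoch ρ q m :=
  prod_nonneg fun _ _ => sub_nonneg.2 (mul_le_one₀ hρ (pow_nonneg hq0 _) (pow_le_one₀ hq0 hq1))

lemma qPoch_pos {ρ q : ℝ} (hq0 : 0 ≤ q) (hq1 : q ≤ 1) (hρ0 : 0 ≤ ρ) (hρ1 : ρ < 1) (m : ℕ) :
    0 < qPoch ρ q m :=
  prod_pos fun _ _ =>
    sub_pos.2 (mul_lt_one_of_nonneg_of_lt_one_left hρ0 hρ1 (pow_le_one₀ hq0 hq1))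

lemma qInt_zero (q : ℝ) : qInt q 0 = 0 := by simp [qInt]

lemma qInt_succ_sub (q : ℝ) (hq : q ≠ 1) (m : ℕ) : qInt q (m + 1) - qInt q m = q ^ m := by
  have : 1 - q ≠ 0 := sub_ne_zero.2 hq.symm
  rw [qInt, qInt, div_sub_div_same, pow_succ]
  field_simp
  ring

lemma qInt_nonneg {q : ℝ} (hq0 : 0 ≤ q) (hq1 : q < 1) (m : ℕ) : 0 ≤ qInt q m :=
  div_nonneg (sub_nonneg.2 (pow_le_one₀ hq0 hq1.le)) (sub_pos.2 hq1).le

lemma qInt_le {q : ℝ} (hq0 : 0 ≤ q) (hq1 : q < 1) (m : ℕ) : qInt q m ≤ 1 / (1 - q) :=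
  div_le_div_of_nonneg_right (sub_le_self _ (pow_nonneg hq0 m)) (sub_pos.2 hq1).le

lemma one_le_qInt {q : ℝ} (hq0 : 0 ≤ q) (hq1 : q < 1) {m : ℕ} (hm : m ≠ 0) : 1 ≤ qInt q m := by
  rw [qInt, le_div_iff₀ (sub_pos.2 hq1), one_mul]
  linarith [pow_le_of_le_one hq0 hq1.le hm]

noncomputable def qNegBinomCoeff (q : ℝ) (n m : ℕ) : ℝ := qPoch (q ^ n) q m / qPoch q q m

lemma qNegBinomCoeff_zero_right (q : ℝ) (n : ℕ) : qNegBinomCoeff q n 0 = 1 := by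
  simp [qNegBinomCoeff, qPoch]

lemma qNegBinomCoeff_zero_left (q : ℝ) {m : ℕ} (hm : m ≠ 0) : qNegBinomCoeff q 0 m = 0 := by
  rw [qNegBinomCoeff, qPoch, prod_eq_zero (mem_range.2 (Nat.pos_of_ne_zero hm))] <;> simp

lemma qNegBinomCoeff_nonneg {q : ℝ} (hq0 : 0 ≤ q) (hq1 : q < 1) (n m : ℕ) :
    0 ≤ qNegBinomCoeff q n m :=
  div_nonneg (qPoch_nonneg hq0 hq1.le (pow_le_one₀ hq0 hq1.le) m)
    (qPoch_pos hq0 hq1.le hq0 hq1 m).le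

lemma qNegBinomCoeff_succ {q : ℝ} (hq0 : 0 ≤ q) (hq1 : q < 1) (n m : ℕ) :
    qNegBinomCoeff q n (m + 1) =
      qNegBinomCoeff q n m * ((1 - q ^ (n + m)) / (1 - q ^ (m + 1))) := by
  have h1 := (qPoch_pos hq0 hq1.le hq0 hq1 m).ne'
  have h2 : 1 - q * q ^ m ≠ 0 := by
    rw [← pow_succ']; exact (sub_pos.2 (pow_lt_one₀ hq0 hq1 m.succ_ne_zero)).ne'
  rw [qNegBinomCoeff, qNegBinomCoeff, qPoch_succ, qPoch_succ, pow_add, pow_succ']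
  field_simp

lemma qNegBinomCoeff_succ_mul_qInt {q : ℝ} (hq0 : 0 ≤ q) (hq1 : q < 1) (n m : ℕ) :
    qNegBinomCoeff q n (m + 1) * qInt q (m + 1) = qNegBinomCoeff q n m * qInt q (n + m) := by
  have : 1 - q ^ (m + 1) ≠ 0 := (sub_pos.2 (pow_lt_one₀ hq0 hq1 m.succ_ne_zero)).ne'
  rw [qNegBinomCoeff_succ hq0 hq1, qInt, qInt]
  field_simp

lemma qNegBinomCoeff_succ_succ {q : ℝ} (hq0 : 0 ≤ q) (hq1 : q < 1) (n m : ℕ) :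
    qNegBinomCoeff q (n + 1) (m + 1) =
      qNegBinomCoeff q n (m + 1) + q ^ n * qNegBinomCoeff q (n + 1) m := by
  have h1 := (qPoch_pos hq0 hq1.le hq0 hq1 m).ne'
  have h2 : 1 - q * q ^ m ≠ 0 := by
    rw [← pow_succ']; exact (sub_pos.2 (pow_lt_one₀ hq0 hq1 m.succ_ne_zero)).ne'
  rw [qNegBinomCoeff, qNegBinomCoeff, qNegBinomCoeff, qPoch_succ (q ^ (n + 1)),
    qPoch_succ' (q ^ n), ← pow_succ, qPoch_succ q, mul_div_assoc',
    div_add_div _ _ (mul_ne_zero h1 h2) h1,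
    div_eq_div_iff (mul_ne_zero h1 h2) (mul_ne_zero (mul_ne_zero h1 h2) h1)]
  ring

lemma summable_qNegBinomCoeff_mul_pow {q t : ℝ} (hq0 : 0 ≤ q) (hq1 : q < 1) (ht0 : 0 ≤ t)
    (ht1 : t < 1) (n : ℕ) : Summable fun m => qNegBinomCoeff q n m * t ^ m := by
  obtain ⟨N, hN⟩ := exists_pow_lt_of_lt_one (sub_pos.2 ht1) hq1
  have hqN : 0 < 1 - q ^ N := by linarith
  have hterm : ∀ m, 0 ≤ qNegBinomCoeff q n m * t ^ m := fun m =>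
    mul_nonneg (qNegBinomCoeff_nonneg hq0 hq1 n m) (pow_nonneg ht0 m)
  refine summable_of_ratio_norm_eventually_le (r := t / (1 - q ^ N))
    ((div_lt_one hqN).2 (by linarith)) ?_
  filter_upwards [eventually_ge_atTop N] with m hm
  have hratio : (1 - q ^ (n + m)) / (1 - q ^ (m + 1)) ≤ 1 / (1 - q ^ N) :=
    div_le_div₀ zero_le_one (sub_le_self _ (pow_nonneg hq0 _)) hqN
      (sub_le_sub_left (pow_le_pow_of_le_one hq0 hq1.le (by omega)) 1)
  rw [Real.norm_of_nonneg (hterm _), Real.norm_of_nonneg (hterm _), qNegBinomCoeff_succ hq0 hq1,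
    pow_succ]
  calc qNegBinomCoeff q n m * ((1 - q ^ (n + m)) / (1 - q ^ (m + 1))) * (t ^ m * t)
      = t * ((1 - q ^ (n + m)) / (1 - q ^ (m + 1))) * (qNegBinomCoeff q n m * t ^ m) := by ring
    _ ≤ t * (1 / (1 - q ^ N)) * (qNegBinomCoeff q n m * t ^ m) := by gcongr; exact hterm m
    _ = t / (1 - q ^ N) * (qNegBinomCoeff q n m * t ^ m) := by ring

/-- The `q`-binomial theorem. -/
theorem hasSum_qNegBinomCoeff_mul_pow {q t : ℝ} (hq0 : 0 ≤ q) (hq1 : q < 1) (ht0 : 0 ≤ t)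
    (ht1 : t < 1) (n : ℕ) :
    HasSum (fun m => qNegBinomCoeff q n m * t ^ m) (qPoch t q n)⁻¹ := by
  refine (summable_qNegBinomCoeff_mul_pow hq0 hq1 ht0 ht1 n).hasSum_iff.2 ?_
  induction n with
  | zero =>
    rw [tsum_eq_single 0 fun m hm => by rw [qNegBinomCoeff_zero_left q hm, zero_mul]]
    simp [qNegBinomCoeff_zero_right, qPoch]
  | succ n ih =>
    have S0 := summable_qNegBinomCoeff_mul_pow hq0 hq1 ht0 ht1 n
    have S1 := summable_qNegBinomCoeff_mul_pow hq0 hq1 ht0 ht1 (n + 1)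
    have hshift : ∀ m, qNegBinomCoeff q (n + 1) (m + 1) * t ^ (m + 1) =
        qNegBinomCoeff q n (m + 1) * t ^ (m + 1) +
          t * q ^ n * (qNegBinomCoeff q (n + 1) m * t ^ m) := fun m => by
      rw [qNegBinomCoeff_succ_succ hq0 hq1]; ring
    have key : ∑' m, qNegBinomCoeff q (n + 1) m * t ^ m =
        ∑' m, qNegBinomCoeff q n m * t ^ m +
          t * q ^ n * ∑' m, qNegBinomCoeff q (n + 1) m * t ^ m := by
      conv_lhs => rw [S1.tsum_eq_zero_add, tsum_congr hshift,
        ((summable_nat_add_iff 1).2 S0).tsum_add (S1.mul_left _), tsum_mul_left]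
      rw [S0.tsum_eq_zero_add]
      simp only [qNegBinomCoeff_zero_right]
      ring
    have hne : 1 - t * q ^ n ≠ 0 :=
      (sub_pos.2 (mul_lt_one_of_nonneg_of_lt_one_left ht0 ht1 (pow_le_one₀ hq0 hq1.le))).ne'
    rw [qPoch_succ, mul_inv, ← ih, eq_mul_inv_iff_mul_eq₀ hne]
    linear_combination key

theorem hasSum_qNegBinomCoeff_mul_pow_mul_qInt_div {q t : ℝ} (hq0 : 0 ≤ q) (hq1 : q < 1)
    (ht0 : 0 ≤ t) (ht1 : t < 1) {n : ℕ} (hn : n ≠ 0) :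
    HasSum (fun m => qNegBinomCoeff q n m * t ^ m * (qInt q m / qInt q (n + m - 1)))
      (t * (qPoch t q n)⁻¹) := by
  rw [← hasSum_nat_add_iff' 1]
  simp only [range_one, sum_singleton, qInt_zero, zero_div, mul_zero, sub_zero]
  refine ((hasSum_qNegBinomCoeff_mul_pow hq0 hq1 ht0 ht1 n).mul_left t).congr_fun fun m => ?_
  have hqInt : qInt q (n + m) ≠ 0 := (one_pos.trans_le (one_le_qInt hq0 hq1 (by omega))).ne'
  rw [show n + (m + 1) - 1 = n + m by omega, mul_div_assoc', ← mul_assoc,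
    mul_right_comm _ _ (qInt q _),
    qNegBinomCoeff_succ_mul_qInt hq0 hq1, pow_succ]
  field_simp

lemma qRInt_id {q : ℝ} (hq0 : 0 ≤ q) (hq1 : q < 1) (α β : ℝ) :
    qRInt q α β (fun s => s) = (β - α) * (α + (β - α) / (1 + q)) := by
  have hq2 : q ^ 2 < 1 := pow_lt_one₀ hq0 hq1 two_ne_zero
  have hsum : HasSum (fun j : ℕ => (α + (β - α) * q ^ j) * q ^ j)
      (α * (1 - q)⁻¹ + (β - α) * (1 - q ^ 2)⁻¹) := by
    refine (((hasSum_geometric_of_lt_one hq0 hq1).mul_left α).add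
      ((hasSum_geometric_of_lt_one (sq_nonneg q) hq2).mul_left (β - α))).congr_fun fun j => ?_
    rw [← pow_mul, mul_comm 2 j, pow_mul]; ring
  have h1 : 1 - q ≠ 0 := (sub_pos.2 hq1).ne'
  have h2 : 1 - q ^ 2 ≠ 0 := (sub_pos.2 hq2).ne'
  have h3 : 1 + q ≠ 0 := by linarith
  rw [qRInt, hsum.tsum_eq]
  field_simp
  ring

/-- The factor `[n+m-1]_q q^{-m} ∫ f d_q^R s` that the operator attaches to the last index
`l_r = m`. -/
noncomputable def KopWeight (q : ℝ) (n : ℕ) (f : ℝ → ℝ) (m : ℕ) : ℝ :=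
  qInt q (n + m - 1) * q ^ (-(m : ℤ)) *
    qRInt q (qInt q m / qInt q (n + m - 1)) (qInt q (m + 1) / qInt q (n + m - 1)) f

lemma KopWeight_id_eq {q : ℝ} (hq0 : 0 < q) (hq1 : q < 1) (n m : ℕ) :
    KopWeight q n (fun s => s) m = (qInt q m + q ^ m / (1 + q)) / qInt q (n + m - 1) := by
  have hlen : qInt q (m + 1) / qInt q (n + m - 1) - qInt q m / qInt q (n + m - 1) =
      q ^ m / qInt q (n + m - 1) := by
    rw [div_sub_div_same, qInt_succ_sub q hq1.ne]
  rw [KopWeight, qRInt_id hq0.le hq1, hlen, zpow_neg, zpow_natCast]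
  rcases eq_or_ne (qInt q (n + m - 1)) 0 with h | h
  · simp [h]
  · have : q ^ m ≠ 0 := pow_ne_zero _ hq0.ne'
    have : 1 + q ≠ 0 := by linarith
    field_simp

lemma qInt_div_le_KopWeight_id {q : ℝ} (hq0 : 0 < q) (hq1 : q < 1) (n m : ℕ) :
    qInt q m / qInt q (n + m - 1) ≤ KopWeight q n (fun s => s) m := by
  rw [KopWeight_id_eq hq0 hq1]
  exact div_le_div_of_nonneg_right (le_add_of_nonneg_right (by positivity))
    (qInt_nonneg hq0.le hq1 _)

lemma KopWeight_id_nonneg {q : ℝ} (hq0 : 0 < q) (hq1 : q < 1) (n m : ℕ) :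
    0 ≤ KopWeight q n (fun s => s) m :=
  (div_nonneg (qInt_nonneg hq0.le hq1 _) (qInt_nonneg hq0.le hq1 _)).trans
    (qInt_div_le_KopWeight_id hq0 hq1 n m)

lemma KopWeight_id_le {q : ℝ} (hq0 : 0 < q) (hq1 : q < 1) (n m : ℕ) :
    KopWeight q n (fun s => s) m ≤ 1 / (1 - q) := by
  have hnum : qInt q m + q ^ m / (1 + q) ≤ 1 / (1 - q) := by
    have : q ^ m / (1 + q) ≤ q ^ m := div_le_self (pow_nonneg hq0.le m) (by linarith)
    linarith [qInt_succ_sub q hq1.ne m, qInt_le hq0.le hq1 (m + 1)]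
  rw [KopWeight_id_eq hq0 hq1]
  rcases Nat.eq_zero_or_pos (n + m - 1) with h | h
  · rw [h, qInt_zero, div_zero]; exact (one_div_pos.2 (sub_pos.2 hq1)).le
  · exact (div_le_self ((qInt_nonneg hq0.le hq1 m).trans (le_add_of_nonneg_right (by positivity)))
      (one_le_qInt hq0.le hq1 h.ne')).trans hnum

lemma summable_qNegBinomCoeff_mul_pow_mul {q t C : ℝ} {w : ℕ → ℝ} (hq0 : 0 ≤ q) (hq1 : q < 1)
    (ht0 : 0 ≤ t) (ht1 : t < 1) (hw0 : ∀ m, 0 ≤ w m) (hwC : ∀ m, w m ≤ C) (n : ℕ) :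
    Summable fun m => qNegBinomCoeff q n m * t ^ m * w m :=
  ((summable_qNegBinomCoeff_mul_pow hq0 hq1 ht0 ht1 n).mul_right C).of_nonneg_of_le
    (fun m => mul_nonneg (mul_nonneg (qNegBinomCoeff_nonneg hq0 hq1 n m) (pow_nonneg ht0 m))
      (hw0 m))
    fun m => mul_le_mul_of_nonneg_left (hwC m)
      (mul_nonneg (qNegBinomCoeff_nonneg hq0 hq1 n m) (pow_nonneg ht0 m))

lemma le_qPoch_mul_tsum_KopWeight_id {q t : ℝ} (hq0 : 0 < q) (hq1 : q < 1) (ht0 : 0 ≤ t)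
    (ht1 : t < 1) {n : ℕ} (hn : n ≠ 0) :
    t ≤ qPoch t q n * ∑' m, qNegBinomCoeff q n m * t ^ m * KopWeight q n (fun s => s) m := by
  have hP := qPoch_pos hq0.le hq1.le ht0 ht1 n
  have hle : t * (qPoch t q n)⁻¹ ≤
      ∑' m, qNegBinomCoeff q n m * t ^ m * KopWeight q n (fun s => s) m :=
    hasSum_le (fun m => mul_le_mul_of_nonneg_left (qInt_div_le_KopWeight_id hq0 hq1 n m)
        (mul_nonneg (qNegBinomCoeff_nonneg hq0.le hq1 n m) (pow_nonneg ht0 m)))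
      (hasSum_qNegBinomCoeff_mul_pow_mul_qInt_div hq0.le hq1 ht0 ht1 hn)
      (summable_qNegBinomCoeff_mul_pow_mul hq0.le hq1 ht0 ht1 (KopWeight_id_nonneg hq0 hq1 n)
        (KopWeight_id_le hq0 hq1 n) n).hasSum
  calc t = qPoch t q n * (t * (qPoch t q n)⁻¹) := by field_simp
    _ ≤ _ := mul_le_mul_of_nonneg_left hle hP.le

theorem hasSum_fin_prod {κ : Type*} {r : ℕ} {f : Fin r → κ → ℝ} {s : Fin r → ℝ}
    (hf0 : ∀ j k, 0 ≤ f j k) (hf : ∀ j, HasSum (f j) (s j)) :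
    HasSum (fun l : Fin r → κ => ∏ j, f j (l j)) (∏ j, s j) := by
  induction r with
  | zero => simp
  | succ r ih =>
    have htail := ih (fun j k => hf0 j.succ k) (fun j => hf j.succ)
    have hhead : 0 ≤ f 0 := fun k => hf0 0 k
    have htail0 : 0 ≤ fun l : Fin r → κ => ∏ j : Fin r, f j.succ (l j) := fun l =>
      prod_nonneg fun j _ => hf0 j.succ (l j)
    have hsum := (hf 0).summable.mul_of_nonneg htail.summable hhead htail0
    have hprod := (hf 0).mul htail hsum
    rw [← (Fin.consEquiv fun _ => κ).hasSum_iff, Fin.prod_univ_succ]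
    refine hprod.congr_fun fun p => ?_
    simp only [Function.comp_apply, Fin.consEquiv_apply, Fin.prod_univ_succ, Fin.cons_zero,
      Fin.cons_succ]

theorem HasSum.antidiagonalTuple {α : Type*} [AddCommMonoid α] [TopologicalSpace α]
    [ContinuousAdd α] [RegularSpace α] {r : ℕ} {F : (Fin r → ℕ) → α} {a : α} (hF : HasSum F a) :
    HasSum (fun p => ∑ l ∈ Finset.Nat.antidiagonalTuple r p, F l) a :=
  ((Finset.Nat.sigmaAntidiagonalTupleEquivTuple r).hasSum_iff.2 hF).sigma fun p =>
    (Finset.Nat.antidiagonalTuple r p).hasSum F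

lemma Kop_eq_tsum_prod {r : ℕ} (hr : 0 < r) (β : Fin r → ℕ → ℝ) (n : ℕ) (q : ℝ) (f : ℝ → ℝ)
    (x : ℝ) :
    Kop r β n q f x = (∏ j, qPoch (x * β j n) q n) *
      ∑' p, ∑ l ∈ Finset.Nat.antidiagonalTuple r p, ∏ j, qNegBinomCoeff q n (l j) *
        (x * β j n) ^ (l j) * if j = ⟨r - 1, by omega⟩ then KopWeight q n f (l j) else 1 := by
  rw [Kop]
  congr 1
  refine tsum_congr fun p => ?_
  rw [sum_mul]
  refine sum_congr rfl fun l hl => ?_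
  rw [lastIdx, dif_pos hr, ← Finset.Nat.mem_antidiagonalTuple.1 hl, ← prod_pow_eq_pow_sum]
  simp only [prod_mul_distrib, prod_ite_eq', mem_univ, if_true, qNegBinomCoeff, mul_pow,
    prod_div_distrib, KopWeight]
  ring

theorem stmt2 (r : ℕ) (hr : 1 ≤ r) (β : Fin r → ℕ → ℝ)
    (hβ : ∀ (j : Fin r) (n : ℕ), 1 ≤ n → β j n ∈ Set.Ioo (0:ℝ) 1)
    (n : ℕ) (hn : 1 ≤ n) (q : ℝ) (hq : q ∈ Set.Ioo (0:ℝ) 1)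
    (x : ℝ) (hx : x ∈ Set.Icc (0:ℝ) 1) :
    x * β ⟨r - 1, by omega⟩ n ≤ Kop r β n q (fun s => s) x := by
  obtain ⟨hq0, hq1⟩ := hq
  set last : Fin r := ⟨r - 1, by omega⟩
  have ht0 : ∀ j, 0 ≤ x * β j n := fun j => mul_nonneg hx.1 (hβ j n hn).1.le
  have ht1 : ∀ j, x * β j n < 1 := fun j =>
    (mul_le_of_le_one_left (hβ j n hn).1.le hx.2).trans_lt (hβ j n hn).2
  set w : Fin r → ℕ → ℝ := fun j m => if j = last then KopWeight q n (fun s => s) m else 1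
  have hw0 : ∀ j m, 0 ≤ w j m := fun j m => ite_nonneg (KopWeight_id_nonneg hq0 hq1 n m) zero_le_one
  have hw1 : ∀ j m, w j m ≤ 1 / (1 - q) := fun j m => by
    dsimp only [w]; split_ifs
    exacts [KopWeight_id_le hq0 hq1 n m, (one_le_div (sub_pos.2 hq1)).2 (sub_le_self _ hq0.le)]
  have hterm : ∀ j m, 0 ≤ qNegBinomCoeff q n m * (x * β j n) ^ m * w j m := fun j m =>
    mul_nonneg (mul_nonneg (qNegBinomCoeff_nonneg hq0.le hq1 n m) (pow_nonneg (ht0 j) m)) (hw0 j m)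
  have hsum : ∀ j, Summable fun m => qNegBinomCoeff q n m * (x * β j n) ^ m * w j m := fun j =>
    summable_qNegBinomCoeff_mul_pow_mul hq0.le hq1 (ht0 j) (ht1 j) (hw0 j) (hw1 j) n
  rw [Kop_eq_tsum_prod hr,
    (hasSum_fin_prod hterm fun j => (hsum j).hasSum).antidiagonalTuple.tsum_eq,
    ← prod_mul_distrib, ← mul_prod_erase _ _ (mem_univ last), prod_eq_one, mul_one]
  · simpa [w] using le_qPoch_mul_tsum_KopWeight_id hq0 hq1 (ht0 last) (ht1 last) (by omega : n ≠ 0)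
  · intro j hj
    simp only [w, if_neg (ne_of_mem_erase hj), mul_one]
    rw [(hasSum_qNegBinomCoeff_mul_pow hq0.le hq1 (ht0 j) (ht1 j) n).tsum_eq,
      mul_inv_cancel₀ (qPoch_pos hq0.le hq1.le (ht0 j) (ht1 j) n).ne']
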